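/- arXiv:1406.1142 — 2 statements merged into one kernel-verified Lean document; each statement's English description precedes it below -/
import Mathlib

section
/- Let F be a uniformly random pairing of the configuration point set W for the degree sequence d, and let K_F be the kernel of the configuration multigraph G_F. Then the distribution of K_F equals the distribution of the configuration multigraph obtained from a uniformly random pairing of the restricted point set Ŵ = W_{ν₂+1} ∪ W_{ν₂+2} ∪ … ∪ W_n consisting of the cells of all vertices of degree at least 3. -/
open Finset
open scoped Classical

/-- A pairing (perfect matching) of a point set: a fixed-point-free involution. -/
def IsPairing {β : Type} (f : β → β) : Prop := Function.Involutive f ∧ ∀ x, f x ≠ x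

/-- `x` is a configuration point belonging to the cell of a kernel vertex
(a vertex of degree at least 3). -/
def isKerPt {n : ℕ} (d : Fin n → ℕ) {W : Type} (φ : W → Fin n) (x : W) : Prop :=
  3 ≤ d (φ x)

/-- The other point in the cell of `w` (canonical when the cell has size two, i.e. for
degree-2 vertices). -/
noncomputable def cellPartner {n : ℕ} {W : Type} (φ : W → Fin n) (w : W) : W :=
  if h : ∃ w', w' ≠ w ∧ φ w' = φ w then h.choose else w

/-- Starting from a point `x` of a kernel cell, follow the pair of `x`, and then
alternately pass through degree-2 cells and follow pairs, until a point of a kernel cell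
is reached:  this is the other endpoint of the kernel edge ("chain") through `x`. -/
noncomputable def chainEnd {n : ℕ} (d : Fin n → ℕ) {W : Type} [Fintype W] [DecidableEq W]
    (φ : W → Fin n) (f : W → W) (x : W) : W :=
  if h : ∃ k, isKerPt d φ ((fun z => f (cellPartner φ z))^[k] (f x))
  then (fun z => f (cellPartner φ z))^[Nat.find h] (f x) else f x

/-- The multiset of kernel edges (as unordered pairs of vertices of `[n]`) of the kernel
`K_F` of the configuration multigraph `G_F`:  each kernel point `x` contributes the pair
`{φ x, φ (chainEnd x)}`, so every kernel edge is recorded once from each of its two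
endpoints. -/
noncomputable def kernelEdges {n : ℕ} (d : Fin n → ℕ) {W : Type} [Fintype W] [DecidableEq W]
    (φ : W → Fin n) (f : W → W) : Multiset (Sym2 (Fin n)) :=
  (Finset.univ.filter fun x : W => isKerPt d φ x).val.map
    (fun x => s(φ x, φ (chainEnd d φ f x)))

/-- The multiset of edges of the configuration multigraph built directly on the restricted
point set `Ŵ` (the cells of the vertices of degree at least 3), again recorded once from
each endpoint. -/
noncomputable def restrictedEdges {n : ℕ} (d : Fin n → ℕ) {W : Type} [Fintype W]
    [DecidableEq W] (φ : W → Fin n)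
    (g : {x : W // isKerPt d φ x} → {x : W // isKerPt d φ x}) : Multiset (Sym2 (Fin n)) :=
  (Finset.univ : Finset {x : W // isKerPt d φ x}).val.map
    (fun x => s(φ x.val, φ (g x).val))

/-!
Let `c` be the involution of `W` that swaps the two points of each degree-2 cell and fixes the
points of the kernel cells. For a pairing `f`, following a chain of the kernel is iterating
`f * c`, so the kernel of `G_F` is the configuration multigraph of the first-return map of `f * c`
to the kernel points. As `c` runs the orbits of `f * c` backwards, this first-return map is again
a pairing. It commutes with the permutations of the kernel points (extended by the identity),
and these act transitively on the pairings of the kernel points, so every pairing of `Ŵ` comes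
from the same number of pairings of `W`.
-/

namespace Equiv.Perm

variable {α : Type*}

section

variable {P : α → Prop}

theorem iterate_apply_eq_pow_succ_apply {p : Perm α} {g : α → α}
    (hg : ∀ z, ¬ P z → g z = p z) {x : α} {N : ℕ}
    (hmin : ∀ j, 0 < j → j < N → ¬ P ((p ^ j) x)) : ∀ k < N, g^[k] (p x) = (p ^ (k + 1)) x
  | 0, _ => by simp
  | k + 1, hk => by
    rw [Function.iterate_succ_apply', iterate_apply_eq_pow_succ_apply hg hmin k (by omega),
      hg _ (hmin _ k.succ_pos (by omega)), pow_succ' p (k + 1), mul_apply]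

variable {f c : Perm α}

theorem inv_eq_self_of_involutive (hc : Function.Involutive c) : c⁻¹ = c := by
  ext x; exact inv_eq_iff_eq.mpr (hc x).symm

theorem apply_mul_pow_apply (hf : Function.Involutive f) (hc : Function.Involutive c) (n : ℕ)
    (x : α) : c (((f * c) ^ n) x) = ((f * c) ^ n)⁻¹ (c x) := by
  have hconj : c * (f * c) * c⁻¹ = (f * c)⁻¹ := by
    rw [mul_inv_rev, inv_eq_self_of_involutive hf, inv_eq_self_of_involutive hc]
    ext y; simp [hc y]
  have h := conj_pow (i := n) (a := c) (b := f * c)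
  rw [hconj, inv_pow] at h
  rw [h]
  simp only [mul_apply, coe_inv, symm_apply_apply]

theorem apply_mul_pow_apply_of_fixed (hf : Function.Involutive f) (hc : Function.Involutive c)
    {u w : α} {N j : ℕ} (hu : c u = u) (hw : ((f * c) ^ N) w = u) (hj : j ≤ N) :
    c (((f * c) ^ j) u) = ((f * c) ^ (N - j)) w := by
  obtain ⟨k, rfl⟩ := Nat.exists_eq_add_of_le hj
  rw [apply_mul_pow_apply hf hc, hu, ← hw, pow_add, mul_apply, Nat.add_sub_cancel_left]
  exact inv_eq_iff_eq.mpr rfl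

theorem apply_iff_of_fixed_iff (hc : Function.Involutive c) (hP : ∀ x, c x = x ↔ P x) (x : α) :
    P (c x) ↔ P x := by
  rw [← hP, ← hP, hc, eq_comm]

theorem commute_ofSubtype [DecidablePred P] (σ : Perm {x // P x}) (hc : Function.Involutive c)
    (hP : ∀ x, c x = x ↔ P x) : Commute (ofSubtype σ) c := by
  change ofSubtype σ * c = c * ofSubtype σ
  ext x
  by_cases hx : P x
  · have hσx : P (ofSubtype σ x) := (ofSubtype_apply_mem_iff_mem σ x).mpr hx
    simp only [mul_apply, (hP x).mpr hx, (hP _).mpr hσx]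
  · have hcx : ¬ P (c x) := (apply_iff_of_fixed_iff hc hP x).not.mpr hx
    simp only [mul_apply, ofSubtype_apply_of_not_mem σ hx, ofSubtype_apply_of_not_mem σ hcx]

theorem involutive_ofSubtype_mul [DecidablePred P] {σ : Perm {x // P x}}
    (hσ : Function.Involutive σ) (hc : Function.Involutive c) (hP : ∀ x, c x = x ↔ P x) :
    Function.Involutive (ofSubtype σ * c) := by
  have hσ2 : σ ^ 2 = 1 := Equiv.ext fun x => by rw [sq, mul_apply, hσ x, one_apply]
  have hc2 : c ^ 2 = 1 := Equiv.ext fun x => by rw [sq, mul_apply, hc x, one_apply]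
  have h := (commute_ofSubtype σ hc hP).mul_pow 2
  rw [← map_pow, hσ2, map_one, hc2, one_mul] at h
  exact fun x => by rw [← mul_apply, ← sq, h, one_apply]

theorem ofSubtype_mul_apply_ne [DecidablePred P] {σ : Perm {x // P x}} (hσ : ∀ x, σ x ≠ x)
    (hc : Function.Involutive c) (hP : ∀ x, c x = x ↔ P x) (x : α) :
    (ofSubtype σ * c) x ≠ x := by
  by_cases hx : P x
  · rw [mul_apply, (hP x).mpr hx, ofSubtype_apply_of_mem _ hx]
    exact fun h => hσ ⟨x, hx⟩ (Subtype.ext h)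
  · have hcx : ¬ P (c x) := (apply_iff_of_fixed_iff hc hP x).not.mpr hx
    rw [mul_apply, ofSubtype_apply_of_not_mem _ hcx]
    exact fun h => hx ((hP x).mp h)

end

variable [Finite α] (p : Perm α) (P : α → Prop)

theorem exists_pow_succ_apply_of_finite {x : α} (hx : P x) : ∃ k, P ((p ^ (k + 1)) x) :=
  ⟨orderOf p - 1, by rwa [Nat.sub_add_cancel (orderOf_pos p), pow_orderOf_eq_one]⟩

noncomputable def firstReturn (x : {x // P x}) : {x // P x} :=
  ⟨(p ^ (Nat.find (exists_pow_succ_apply_of_finite p P x.2) + 1)) x,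
    Nat.find_spec (exists_pow_succ_apply_of_finite p P x.2)⟩

variable {p P}

theorem exists_coe_firstReturn_eq (x : {x // P x}) :
    ∃ N, 0 < N ∧ (firstReturn p P x : α) = (p ^ N) x ∧
      ∀ j, 0 < j → j < N → ¬ P ((p ^ j) x) := by
  refine ⟨_, Nat.succ_pos _, rfl, fun j hj hjN => ?_⟩
  obtain ⟨k, rfl⟩ := Nat.exists_eq_succ_of_ne_zero hj.ne'
  exact Nat.find_min _ (Nat.succ_lt_succ_iff.mp hjN)

theorem coe_firstReturn_eq {x : {x // P x}} {N : ℕ} (hN : 0 < N) (hPN : P ((p ^ N) x))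
    (hmin : ∀ j, 0 < j → j < N → ¬ P ((p ^ j) x)) :
    (firstReturn p P x : α) = (p ^ N) x := by
  obtain ⟨M, hM, hx, hminM⟩ := exists_coe_firstReturn_eq (p := p) x
  obtain hlt | rfl | hgt := lt_trichotomy M N
  · exact absurd (hx ▸ (firstReturn p P x).2) (hmin M hM hlt)
  · exact hx
  · exact absurd hPN (hminM N hN hgt)

theorem firstReturn_conj (τ : Perm α) (hτ : ∀ x, P (τ x) ↔ P x) (x : {x // P x}) :
    firstReturn (τ * p * τ⁻¹) P (τ.subtypePerm hτ x) =
      τ.subtypePerm hτ (firstReturn p P x) := by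
  obtain ⟨N, hN, hx, hmin⟩ := exists_coe_firstReturn_eq (p := p) x
  have hpow : ∀ j, ((τ * p * τ⁻¹) ^ j) (τ x) = τ ((p ^ j) x) := fun j => by
    rw [conj_pow]; simp [Perm.mul_apply]
  ext
  rw [coe_firstReturn_eq (N := N) hN]
  · simp only [subtypePerm_apply, hpow, hx]
  · simp only [subtypePerm_apply, hpow, hτ, ← hx]; exact (firstReturn p P x).2
  · intro j hj hjN; simp only [subtypePerm_apply, hpow, hτ]; exact hmin j hj hjN

theorem firstReturn_ofSubtype [DecidablePred P] (σ : Perm {x // P x}) :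
    firstReturn (ofSubtype σ) P = σ := by
  ext x
  have hσ : P ((ofSubtype σ ^ 1) x) := by rw [pow_one, ofSubtype_apply_coe]; exact (σ x).2
  rw [coe_firstReturn_eq one_pos hσ (fun j hj hj1 => absurd hj1 (by omega)), pow_one,
    ofSubtype_apply_coe]

section Involutions

variable {f c : Perm α} (hf : Function.Involutive f) (hc : Function.Involutive c)
  (hP : ∀ x, c x = x ↔ P x)
include hf hc hP

theorem firstReturn_mul_involutive : Function.Involutive (firstReturn (f * c) P) := by
  intro x
  set y := firstReturn (f * c) P x
  obtain ⟨N, hN, hy, hmin⟩ := exists_coe_firstReturn_eq (p := f * c) x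
  have hrefl : ∀ j ≤ N, ((f * c) ^ j) y = c (((f * c) ^ (N - j)) x) := fun j hj => by
    rw [← apply_mul_pow_apply_of_fixed hf hc ((hP _).mpr y.2) hy.symm hj, hc]
  have hxN : ((f * c) ^ N) y = x := by
    rw [hrefl N le_rfl, Nat.sub_self, pow_zero, one_apply, (hP _).mpr x.2]
  ext
  rw [coe_firstReturn_eq hN (hxN ▸ x.2), hxN]
  intro j hj hjN
  rw [hrefl j hjN.le, apply_iff_of_fixed_iff hc hP]
  exact hmin (N - j) (by omega) (by omega)

theorem firstReturn_mul_ne (hf' : ∀ x, f x ≠ x) (x : {x // P x}) :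
    firstReturn (f * c) P x ≠ x := by
  intro hx
  obtain ⟨N, hN, hxN, hmin⟩ := exists_coe_firstReturn_eq (p := f * c) x
  rw [hx] at hxN
  have hrefl : ∀ j ≤ N, c (((f * c) ^ j) x) = ((f * c) ^ (N - j)) x :=
    fun j hj => apply_mul_pow_apply_of_fixed hf hc ((hP _).mpr x.2) hxN.symm hj
  obtain ⟨j, hj | hj⟩ := Nat.even_or_odd' N
  · -- the midpoint `(f * c) ^ j x` of the orbit would be a fixed point of `c` outside `P`
    refine hmin j (by omega) (by omega) ((hP _).mp ?_)
    rw [hrefl j (by omega), show N - j = j by omega]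
  · -- `c ((f * c) ^ j x)` would be a fixed point of `f`
    have h := hrefl j (by omega)
    rw [show N - j = j + 1 by omega, pow_succ', mul_apply, mul_apply] at h
    exact hf' _ h.symm

end Involutions

end Equiv.Perm

theorem isPairing_arrowCongr_iff {β γ : Type} (τ : β ≃ γ) {f : β → β} :
    IsPairing (Equiv.arrowCongr τ τ f) ↔ IsPairing f := by
  simp [IsPairing, Function.Involutive, τ.forall_congr_left, ← τ.eq_symm_apply]

theorem IsPairing.cycleType_toPerm {K : Type} [Fintype K] [DecidableEq K] {g : K → K}
    (hg : IsPairing g) :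
    (hg.1.toPerm g).cycleType = Multiset.replicate (Fintype.card K / 2) 2 := by
  have hsq : hg.1.toPerm g ^ 2 = 1 := by ext x; rw [sq, Equiv.Perm.mul_apply]; exact hg.1 x
  have hrep := Equiv.Perm.cycleType_of_pow_prime_eq_one hsq
  have hsum := (hg.1.toPerm g).sum_cycleType
  have hsupp : (hg.1.toPerm g).support = Finset.univ := by ext x; simpa using hg.2 x
  rw [hrep, Multiset.sum_replicate, hsupp, Finset.card_univ, smul_eq_mul] at hsum
  rw [hrep]
  congr
  omega

theorem IsPairing.exists_arrowCongr_eq {K : Type} [Fintype K] [DecidableEq K] {g₁ g₂ : K → K}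
    (h₁ : IsPairing g₁) (h₂ : IsPairing g₂) :
    ∃ σ : Equiv.Perm K, Equiv.arrowCongr σ σ g₁ = g₂ := by
  have hconj : IsConj (h₁.1.toPerm g₁) (h₂.1.toPerm g₂) := by
    rw [Equiv.Perm.isConj_iff_cycleType_eq, h₁.cycleType_toPerm, h₂.cycleType_toPerm]
  obtain ⟨σ, hσ⟩ := isConj_iff.mp hconj
  exact ⟨σ, funext fun x => congrArg (· x) hσ⟩

theorem Nat.card_and_comp_eq_mul {A B : Type*} [Finite A] [Finite B] {PA : A → Prop}
    {PB : B → Prop} {Φ : A → B} (hΦ : ∀ a, PA a → PB (Φ a)) {C : ℕ}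
    (hC : ∀ b, PB b → Nat.card {a // PA a ∧ Φ a = b} = C) (R : B → Prop) :
    Nat.card {a // PA a ∧ R (Φ a)} = Nat.card {b // PB b ∧ R b} * C := by
  have : Fintype {b // PB b ∧ R b} := Fintype.ofFinite _
  let e : {a // PA a ∧ R (Φ a)} ≃ Σ b : {b // PB b ∧ R b}, {a // PA a ∧ Φ a = b} :=
    { toFun := fun a => ⟨⟨Φ a, hΦ a a.2.1, a.2.2⟩, a, a.2.1, rfl⟩
      invFun := fun x => ⟨x.2, x.2.2.1, by rw [x.2.2.2]; exact x.1.2.2⟩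
      left_inv := fun _ => rfl
      right_inv := fun ⟨⟨_, _⟩, _, _, hab⟩ => by dsimp only at hab; subst hab; rfl }
  rw [Nat.card_congr e, Nat.card_sigma,
    Finset.sum_congr rfl fun (b : {b // PB b ∧ R b}) _ => hC b b.2.1,
    Finset.sum_const, Finset.card_univ, smul_eq_mul, Nat.card_eq_fintype_card]

theorem card_div_card_eq_of_fibers {A B : Type*} [Finite A] [Finite B] {PA : A → Prop}
    {PB : B → Prop} (Φ : A → B) (hΦ : ∀ a, PA a → PB (Φ a))
    (hsurj : ∀ b, PB b → ∃ a, PA a ∧ Φ a = b)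
    (hfib : ∀ b₁ b₂, PB b₁ → PB b₂ →
      Nat.card {a // PA a ∧ Φ a = b₁} = Nat.card {a // PA a ∧ Φ a = b₂})
    (Q : B → Prop) :
    (Nat.card {a // PA a ∧ Q (Φ a)} : ℝ) / Nat.card {a // PA a} =
      Nat.card {b // PB b ∧ Q b} / Nat.card {b // PB b} := by
  by_cases hB : ∃ b₀, PB b₀
  · obtain ⟨b₀, hb₀⟩ := hB
    have hC := fun b hb => hfib b b₀ hb hb₀
    have hpos : Nat.card {a // PA a ∧ Φ a = b₀} ≠ 0 := by
      obtain ⟨a, ha⟩ := hsurj b₀ hb₀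
      have : Nonempty {a // PA a ∧ Φ a = b₀} := ⟨⟨a, ha⟩⟩
      exact Nat.card_ne_zero.mpr ⟨inferInstance, inferInstance⟩
    have hall := Nat.card_and_comp_eq_mul hΦ hC fun _ => True
    simp only [and_true] at hall
    rw [Nat.card_and_comp_eq_mul hΦ hC Q, hall, Nat.cast_mul, Nat.cast_mul,
      mul_div_mul_right _ _ (Nat.cast_ne_zero.mpr hpos)]
  · push Not at hB
    have : IsEmpty {a // PA a} := ⟨fun a => hB _ (hΦ a.1 a.2)⟩
    have : IsEmpty {b // PB b} := ⟨fun b => hB b.1 b.2⟩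
    simp

section Kernel

open Equiv Equiv.Perm

variable {n : ℕ} {W : Type}

noncomputable def cellSwap (d : Fin n → ℕ) (φ : W → Fin n) (w : W) : W :=
  if isKerPt d φ w then w else cellPartner φ w

/-- For a pairing `f` every chain ends at a kernel point, so the fallback `x` is never used. -/
noncomputable def kernelPairing [Fintype W] [DecidableEq W] (d : Fin n → ℕ) (φ : W → Fin n)
    (f : W → W) (x : {x : W // isKerPt d φ x}) : {x : W // isKerPt d φ x} :=
  if h : isKerPt d φ (chainEnd d φ f x) then ⟨_, h⟩ else x

variable [Fintype W] {d : Fin n → ℕ} {φ : W → Fin n} (hd : ∀ i, 2 ≤ d i)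
  (hcell : ∀ i, (Finset.univ.filter fun w => φ w = i).card = d i)
include hd hcell

theorem cellPartner_ne_and_eq (w : W) :
    cellPartner φ w ≠ w ∧ φ (cellPartner φ w) = φ w := by
  have h : ∃ w', w' ≠ w ∧ φ w' = φ w := by
    obtain ⟨w', hw', hne⟩ := Finset.exists_mem_ne (s := univ.filter fun v => φ v = φ w)
      (by rw [hcell]; linarith [hd (φ w)]) w
    exact ⟨w', hne, (Finset.mem_filter.mp hw').2⟩
  rw [cellPartner, dif_pos h]
  exact h.choose_spec

theorem cellPartner_cellPartner {w : W} (hw : d (φ w) = 2) :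
    cellPartner φ (cellPartner φ w) = w := by
  obtain ⟨a, b, hab, hs⟩ := Finset.card_eq_two.mp ((hcell (φ w)).trans hw)
  have hmem : ∀ v, φ v = φ w → v = a ∨ v = b := fun v hv => by
    simpa [hs] using (Finset.mem_filter.mpr ⟨mem_univ v, hv⟩ :
      v ∈ univ.filter fun v => φ v = φ w)
  obtain ⟨h₁, h₁'⟩ := cellPartner_ne_and_eq hd hcell w
  obtain ⟨h₂, h₂'⟩ := cellPartner_ne_and_eq hd hcell (cellPartner φ w)
  rcases hmem w rfl with rfl | rfl <;> rcases hmem _ h₁' with h | h <;>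
    rcases hmem _ (h₂'.trans h₁') with h' | h' <;> simp_all

theorem cellSwap_involutive : Function.Involutive (cellSwap d φ) := by
  intro w
  by_cases hw : isKerPt d φ w
  · simp only [cellSwap, if_pos hw]
  · have hw' : ¬ isKerPt d φ (cellPartner φ w) := by
      rwa [isKerPt, (cellPartner_ne_and_eq hd hcell w).2]
    simp only [cellSwap, if_neg hw, if_neg hw']
    exact cellPartner_cellPartner hd hcell (by unfold isKerPt at hw; linarith [hd (φ w)])

theorem cellSwap_eq_self_iff (w : W) : cellSwap d φ w = w ↔ isKerPt d φ w := by
  by_cases hw : isKerPt d φ w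
  · simp [cellSwap, hw]
  · simp [cellSwap, hw, (cellPartner_ne_and_eq hd hcell w).1]

noncomputable def cellSwapPerm : Equiv.Perm W :=
  (cellSwap_involutive hd hcell).toPerm _

variable [DecidableEq W]

theorem chainEnd_eq_firstReturn {f : W → W} (hf : IsPairing f) (x : {x : W // isKerPt d φ x}) :
    chainEnd d φ f x =
      firstReturn (hf.1.toPerm f * cellSwapPerm hd hcell) (isKerPt d φ) x := by
  set p := hf.1.toPerm f * cellSwapPerm hd hcell
  obtain ⟨N, hN, hx, hmin⟩ := exists_coe_firstReturn_eq (p := p) x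
  have hpx : p x = f x := by
    change f (cellSwap d φ x) = f x
    rw [cellSwap, if_pos x.2]
  have hiter := iterate_apply_eq_pow_succ_apply (g := fun z => f (cellPartner φ z))
    (fun z hz => by change _ = f (cellSwap d φ z); rw [cellSwap, if_neg hz]) hmin
  rw [hpx] at hiter
  have hhit : isKerPt d φ ((fun z => f (cellPartner φ z))^[N - 1] (f x)) := by
    rw [hiter _ (by omega), Nat.sub_add_cancel hN, ← hx]
    exact (firstReturn p _ x).2
  have hex : ∃ k, isKerPt d φ ((fun z => f (cellPartner φ z))^[k] (f x)) := ⟨_, hhit⟩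
  have hfind : Nat.find hex = N - 1 := (Nat.find_eq_iff hex).mpr ⟨hhit, fun k hk => by
    rw [hiter k (by omega)]; exact hmin _ k.succ_pos (by omega)⟩
  rw [chainEnd, dif_pos hex, hfind, hx, hiter _ (by omega), Nat.sub_add_cancel hN]

theorem kernelPairing_eq_firstReturn {f : W → W} (hf : IsPairing f) :
    kernelPairing d φ f = firstReturn (hf.1.toPerm f * cellSwapPerm hd hcell) (isKerPt d φ) := by
  funext x
  have h := chainEnd_eq_firstReturn hd hcell hf x
  rw [kernelPairing, dif_pos (h ▸ (firstReturn _ _ x).2)]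
  exact Subtype.ext h

theorem isPairing_kernelPairing {f : W → W} (hf : IsPairing f) :
    IsPairing (kernelPairing d φ f) := by
  rw [kernelPairing_eq_firstReturn hd hcell hf]
  exact ⟨firstReturn_mul_involutive hf.1 (cellSwap_involutive hd hcell)
      (cellSwap_eq_self_iff hd hcell),
    firstReturn_mul_ne hf.1 (cellSwap_involutive hd hcell)
      (cellSwap_eq_self_iff hd hcell) hf.2⟩

theorem kernelEdges_eq_restrictedEdges {f : W → W} (hf : IsPairing f) :
    kernelEdges d φ f = restrictedEdges d φ (kernelPairing d φ f) := by
  rw [kernelEdges, restrictedEdges,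
    ← univ_val_map_subtype_restrict (fun w => s(φ w, φ (chainEnd d φ f w))) (isKerPt d φ)]
  refine Multiset.map_congr rfl fun x _ => ?_
  rw [kernelPairing_eq_firstReturn hd hcell hf, ← chainEnd_eq_firstReturn hd hcell hf]
  rfl

theorem kernelPairing_arrowCongr {f : W → W} (hf : IsPairing f)
    (σ : Perm {x : W // isKerPt d φ x}) :
    kernelPairing d φ (arrowCongr (ofSubtype σ) (ofSubtype σ) f) =
      arrowCongr σ σ (kernelPairing d φ f) := by
  have hf' := (isPairing_arrowCongr_iff (ofSubtype σ)).mpr hf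
  have hcomm := commute_ofSubtype (c := cellSwapPerm hd hcell) σ (cellSwap_involutive hd hcell)
    (cellSwap_eq_self_iff hd hcell)
  have hp : hf'.1.toPerm _ * cellSwapPerm hd hcell =
      ofSubtype σ * (hf.1.toPerm f * cellSwapPerm hd hcell) * (ofSubtype σ)⁻¹ := by
    ext w
    change ofSubtype σ (f ((ofSubtype σ)⁻¹ (cellSwapPerm hd hcell w))) =
      ofSubtype σ (f (cellSwapPerm hd hcell ((ofSubtype σ)⁻¹ w)))
    rw [← mul_apply, hcomm.inv_left.eq, mul_apply]
  funext x
  rw [kernelPairing_eq_firstReturn hd hcell hf', kernelPairing_eq_firstReturn hd hcell hf, hp]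
  have h := firstReturn_conj (p := hf.1.toPerm f * cellSwapPerm hd hcell) (ofSubtype σ)
    (ofSubtype_apply_mem_iff_mem σ) (σ.symm x)
  rw [subtypePerm_ofSubtype, apply_symm_apply] at h
  exact h

theorem exists_kernelPairing_eq {g : {x : W // isKerPt d φ x} → {x : W // isKerPt d φ x}}
    (hg : IsPairing g) : ∃ f, IsPairing f ∧ kernelPairing d φ f = g := by
  set τ := ofSubtype (hg.1.toPerm g)
  set C := cellSwapPerm hd hcell
  have hC : Function.Involutive C := cellSwap_involutive hd hcell
  have hf : IsPairing ⇑(τ * C) :=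
    ⟨involutive_ofSubtype_mul hg.1 hC (cellSwap_eq_self_iff hd hcell),
      ofSubtype_mul_apply_ne hg.2 hC (cellSwap_eq_self_iff hd hcell)⟩
  have hτC : hf.1.toPerm _ * C = τ := Equiv.ext fun w => congrArg τ (hC w)
  refine ⟨τ * C, hf, ?_⟩
  rw [kernelPairing_eq_firstReturn hd hcell hf, hτC, firstReturn_ofSubtype]
  rfl

theorem card_fiber_kernelPairing_eq
    {g₁ g₂ : {x : W // isKerPt d φ x} → {x : W // isKerPt d φ x}}
    (h₁ : IsPairing g₁) (h₂ : IsPairing g₂) :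
    Nat.card {f : W → W // IsPairing f ∧ kernelPairing d φ f = g₁} =
      Nat.card {f : W → W // IsPairing f ∧ kernelPairing d φ f = g₂} := by
  obtain ⟨σ, hσ⟩ := h₁.exists_arrowCongr_eq h₂
  refine Nat.card_congr ((arrowCongr (ofSubtype σ) (ofSubtype σ)).subtypeEquiv fun f => ?_)
  rw [isPairing_arrowCongr_iff, ← hσ]
  refine and_congr_right fun hf => ?_
  rw [kernelPairing_arrowCongr hd hcell hf, (arrowCongr σ σ).injective.eq_iff]

end Kernel

/-- For a uniformly random pairing `F` of the configuration point set `W`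
of a degree sequence `d` with all degrees at least `2`, the distribution of the kernel
`K_F` of the configuration multigraph `G_F` equals the distribution of the configuration
multigraph obtained from a uniformly random pairing of the restricted point set `Ŵ`
consisting of the cells of the vertices of degree at least `3`. -/
theorem kernel_of_configuration_is_configuration
    (n : ℕ) (d : Fin n → ℕ) (hd : ∀ i, 2 ≤ d i)
    (W : Type) [Fintype W] [DecidableEq W] (φ : W → Fin n)
    (hcell : ∀ i, (Finset.univ.filter fun w => φ w = i).card = d i)
    (m0 : Multiset (Sym2 (Fin n))) :
    (Nat.card {f : W → W // IsPairing f ∧ kernelEdges d φ f = m0} : ℝ) /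
        (Nat.card {f : W → W // IsPairing f} : ℝ)
      = (Nat.card {g : {x : W // isKerPt d φ x} → {x : W // isKerPt d φ x} //
            IsPairing g ∧ restrictedEdges d φ g = m0} : ℝ) /
        (Nat.card {g : {x : W // isKerPt d φ x} → {x : W // isKerPt d φ x} //
            IsPairing g} : ℝ) := by
  have hnum : Nat.card {f : W → W // IsPairing f ∧ kernelEdges d φ f = m0} =
      Nat.card {f : W → W // IsPairing f ∧ restrictedEdges d φ (kernelPairing d φ f) = m0} :=
    Nat.card_congr <| Equiv.subtypeEquivRight fun f => and_congr_right fun hf => by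
      rw [kernelEdges_eq_restrictedEdges hd hcell hf]
  rw [hnum]
  exact card_div_card_eq_of_fibers (kernelPairing d φ)
    (fun _ => isPairing_kernelPairing hd hcell) (fun _ => exists_kernelPairing_eq hd hcell)
    (fun _ _ => card_fiber_kernelPairing_eq hd hcell) fun g => restrictedEdges d φ g = m0
end

section
/- Let M, ν₂ → ∞ with ν₂ = M^α for a fixed 0 < α < 1, and let (ℓ_e)_{e∈[M]} be uniform over all compositions of M + ν₂ into M positive parts. Let θ > 0 be an arbitrarily small positive constant and set ℓ_α = ⌈1/(1−α) + 1 + θ⌉. Then with high probability ℓ_e ≤ ℓ_α for every e ∈ [M]. -/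
open Filter Finset
open scoped Classical

/-- The set of compositions of `s` into `M` positive parts, encoded as functions
`Fin M → Fin (s+1)` (each part is at most `s`, so this encoding is faithful). -/
noncomputable def compSet (M s : ℕ) : Finset (Fin M → Fin (s + 1)) :=
  Finset.univ.filter fun f => (∀ i, 1 ≤ (f i : ℕ)) ∧ (∑ i, (f i : ℕ)) = s

/-- Probability of the event `Q` under the uniform distribution on compositions of `s`
into `M` positive parts. -/
noncomputable def compProb (M s : ℕ) (Q : (Fin M → ℕ) → Prop) : ℝ :=
  (((compSet M s).filter fun f => Q fun i => (f i : ℕ)).card : ℝ) / ((compSet M s).card : ℝ)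

/-! By a union bound over the `M` parts it suffices that one fixed part exceeds `L` with
probability at most `(ν/M)^L`. After subtracting prescribed lower bounds `b`, compositions of `s`
become weak compositions of `s - ∑ b`, counted by `multichoose M (s - ∑ b)`; since
`multichoose M (k + 1) * (k + 1) ≥ multichoose M k * M`, raising the lower bound of one part by
`L` divides the count by at least `(M/ν)^L`. With `ν = M^α` the bound `M (ν/M)^L` equals
`M^(1 - (1 - α) L)`, which tends to `0` because `(1 - α) L > 1`. -/

noncomputable def compositionsAbove {M : ℕ} (b : Fin M → ℕ) (s : ℕ) :
    Finset (Fin M → Fin (s + 1)) :=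
  univ.filter fun f => (∀ i, b i ≤ f i) ∧ ∑ i, (f i : ℕ) = s

lemma compSet_eq_compositionsAbove_one (M s : ℕ) : compSet M s = compositionsAbove 1 s := rfl

lemma filter_lt_compSet_eq_compositionsAbove {M : ℕ} (s L : ℕ) (e : Fin M) :
    (compSet M s).filter (fun f => L < f e) = compositionsAbove (1 + Pi.single e L) s := by
  ext f
  simp only [compSet, compositionsAbove, mem_filter, mem_univ, true_and, Pi.add_apply,
    Pi.one_apply, Pi.single_apply]
  constructor
  · rintro ⟨⟨hpos, hsum⟩, hlt⟩
    refine ⟨fun i => ?_, hsum⟩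
    split_ifs with h
    · subst h; omega
    · simpa using hpos i
  · rintro ⟨hle, hsum⟩
    refine ⟨⟨fun i => le_trans (by omega) (hle i), hsum⟩, ?_⟩
    simpa [Nat.one_add_le_iff] using hle e

lemma compositionsAbove_eq_empty {M : ℕ} {b : Fin M → ℕ} {s : ℕ} (h : s < ∑ i, b i) :
    compositionsAbove b s = ∅ := by
  refine eq_empty_of_forall_notMem fun f hf => ?_
  simp only [compositionsAbove, mem_filter, mem_univ, true_and] at hf
  exact h.not_ge (hf.2 ▸ sum_le_sum fun i _ => hf.1 i)

lemma card_piAntidiag_univ {ι : Type*} [Fintype ι] [DecidableEq ι] (n : ℕ) :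
    (piAntidiag (univ : Finset ι) n).card = Nat.multichoose (Fintype.card ι) n := by
  rw [← map_sym_eq_piAntidiag, card_map, sym_univ, card_univ, Sym.card_sym_eq_multichoose]

lemma card_compositionsAbove {M : ℕ} {b : Fin M → ℕ} {s : ℕ} (h : ∑ i, b i ≤ s) :
    (compositionsAbove b s).card = Nat.multichoose M (s - ∑ i, b i) := by
  have hcard := card_piAntidiag_univ (ι := Fin M) (s - ∑ i, b i)
  rw [Fintype.card_fin] at hcard
  rw [← hcard]
  refine card_bij' (fun f _ i => f i - b i) (fun g hg i => ⟨g i + b i, ?_⟩) ?_ ?_ ?_ ?_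
  · have hgi : g i ≤ s - ∑ j, b j :=
      (mem_piAntidiag.1 hg).1 ▸ single_le_sum (fun _ _ => Nat.zero_le _) (mem_univ i)
    have hbi : b i ≤ ∑ j, b j := single_le_sum (fun _ _ => Nat.zero_le _) (mem_univ i)
    omega
  · intro f hf
    simp only [compositionsAbove, mem_filter, mem_univ, true_and] at hf
    refine mem_piAntidiag.2 ⟨?_, fun i _ => mem_univ i⟩
    rw [sum_tsub_distrib _ fun i _ => hf.1 i, hf.2]
  · intro g hg
    rw [mem_piAntidiag] at hg
    simp only [compositionsAbove, mem_filter, mem_univ, true_and]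
    refine ⟨fun i => Nat.le_add_left _ _, ?_⟩
    rw [sum_add_distrib, hg.1, Nat.sub_add_cancel h]
  · intro f hf
    simp only [compositionsAbove, mem_filter, mem_univ, true_and] at hf
    funext i
    exact Fin.ext (Nat.sub_add_cancel (hf.1 i))
  · intro g _
    simp

lemma multichoose_mul_le_multichoose_succ_mul (M n : ℕ) :
    Nat.multichoose M n * M ≤ Nat.multichoose M (n + 1) * (n + 1) := by
  rcases M with _ | m
  · simp
  have hstep := Nat.add_one_mul_choose_eq (m + n) n
  rw [Nat.multichoose_eq, Nat.multichoose_eq, show m + 1 + n - 1 = m + n by omega,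
    show m + 1 + (n + 1) - 1 = m + n + 1 by omega, ← hstep, mul_comm]
  exact Nat.mul_le_mul_right _ (by omega)

lemma multichoose_mul_pow_le (M k L : ℕ) :
    Nat.multichoose M k * M ^ L ≤ Nat.multichoose M (k + L) * (k + L) ^ L := by
  induction L with
  | zero => simp
  | succ L ih =>
    calc Nat.multichoose M k * M ^ (L + 1)
        = Nat.multichoose M k * M ^ L * M := by ring
      _ ≤ Nat.multichoose M (k + L) * M * (k + L) ^ L := by
          rw [mul_right_comm _ M]; exact Nat.mul_le_mul_right _ ih
      _ ≤ Nat.multichoose M (k + L + 1) * (k + L + 1) * (k + L + 1) ^ L :=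
          Nat.mul_le_mul (multichoose_mul_le_multichoose_succ_mul M (k + L))
            (Nat.pow_le_pow_left (by omega) L)
      _ = Nat.multichoose M (k + (L + 1)) * (k + (L + 1)) ^ (L + 1) := by ring_nf

lemma card_filter_lt_compSet_mul_pow_le (M ν L : ℕ) (e : Fin M) :
    ((compSet M (ν + M)).filter fun f => L < f e).card * M ^ L
      ≤ (compSet M (ν + M)).card * ν ^ L := by
  have hsum : ∑ i, (1 + Pi.single e L : Fin M → ℕ) i = M + L := by
    simp [sum_add_distrib]
  rw [filter_lt_compSet_eq_compositionsAbove, compSet_eq_compositionsAbove_one]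
  rcases lt_or_ge ν L with hlt | hle
  · rw [compositionsAbove_eq_empty (by omega)]
    simp
  · rw [card_compositionsAbove (by omega), card_compositionsAbove (by simp), hsum]
    simpa [show ν + M - (M + L) = ν - L by omega, Nat.sub_add_cancel hle]
      using multichoose_mul_pow_le M (ν - L) L

lemma compProb_exists_lt_le (M ν L : ℕ) :
    compProb M (ν + M) (fun ℓ => ∃ e, L < ℓ e) ≤ M * ((ν : ℝ) / M) ^ L := by
  rcases M.eq_zero_or_pos with rfl | hM
  · simp [compProb]
  have hS : 0 < (compSet M (ν + M)).card := by
    rw [compSet_eq_compositionsAbove_one, card_compositionsAbove (by simp), Nat.multichoose_eq]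
    exact Nat.choose_pos (by simp; omega)
  rw [compProb, filter_congr_decidable]
  set S := compSet M (ν + M)
  have hunion : (S.filter fun f => ∃ e, L < f e) ⊆
      univ.biUnion fun e => S.filter fun f => L < f e := by
    intro f hf
    obtain ⟨hfS, e, he⟩ := mem_filter.1 hf
    exact mem_biUnion.2 ⟨e, mem_univ e, mem_filter.2 ⟨hfS, he⟩⟩
  have hcount : (S.filter fun f => ∃ e, L < f e).card * M ^ L ≤ M * (S.card * ν ^ L) :=
    calc (S.filter fun f => ∃ e, L < f e).card * M ^ L
        ≤ (∑ e, (S.filter fun f => L < f e).card) * M ^ L :=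
          Nat.mul_le_mul_right _ ((card_le_card hunion).trans card_biUnion_le)
      _ = ∑ e, (S.filter fun f => L < f e).card * M ^ L := sum_mul _ _ _
      _ ≤ ∑ _e : Fin M, S.card * ν ^ L :=
          sum_le_sum fun e _ => card_filter_lt_compSet_mul_pow_le M ν L e
      _ = M * (S.card * ν ^ L) := by simp
  have hMR : (0 : ℝ) < M := by exact_mod_cast hM
  rw [div_pow, mul_div_assoc', div_le_div_iff₀ (by exact_mod_cast hS) (by positivity)]
  calc ((S.filter fun f => ∃ e, L < f e).card : ℝ) * M ^ L ≤ M * (S.card * ν ^ L) := by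
        exact_mod_cast hcount
    _ = M * ν ^ L * S.card := by ring

theorem no_edge_longer_than_ell_alpha_general
    (α θ : ℝ) (hα1 : α < 1) (hθ : 0 < θ)
    (M ν : ℕ → ℕ)
    (hM : Tendsto M atTop atTop)
    (hpow : ∀ t, (ν t : ℝ) = (M t : ℝ) ^ α) :
    Tendsto (fun t => compProb (M t) (ν t + M t)
      (fun ℓ => ∃ e : Fin (M t), ⌈1 / (1 - α) + 1 + θ⌉₊ < ℓ e))
      atTop (nhds 0) := by
  set L := ⌈1 / (1 - α) + 1 + θ⌉₊
  have hexp : 1 + (α - 1) * L < 0 := by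
    have hL : 1 / (1 - α) + 1 + θ ≤ L := Nat.le_ceil _
    have h1α : 0 < 1 - α := by linarith
    have hmargin : 0 < (1 - α) * (1 + θ) := mul_pos h1α (by linarith)
    have hscaled : 1 + (1 - α) * (1 + θ) ≤ (1 - α) * L :=
      calc 1 + (1 - α) * (1 + θ) = (1 - α) * (1 / (1 - α) + 1 + θ) := by field_simp; ring
        _ ≤ (1 - α) * L := by gcongr
    linarith
  have hbound : ∀ t, compProb (M t) (ν t + M t) (fun ℓ => ∃ e, L < ℓ e)
      ≤ (M t : ℝ) ^ (1 + (α - 1) * L) := fun t => by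
    have hM0 : (0 : ℝ) ≤ M t := Nat.cast_nonneg _
    rw [Real.rpow_one_add' hM0 hexp.ne, Real.rpow_mul_natCast hM0,
      Real.rpow_sub_one' hM0 (by linarith), ← hpow]
    exact compProb_exists_lt_le (M t) (ν t) L
  have hdecay : Tendsto (fun t => (M t : ℝ) ^ (1 + (α - 1) * L)) atTop (nhds 0) := by
    have hrpow := tendsto_rpow_neg_atTop (neg_pos.2 hexp)
    rw [neg_neg] at hrpow
    exact hrpow.comp (tendsto_natCast_atTop_atTop.comp hM)
  exact squeeze_zero (fun t => by unfold compProb; positivity) hbound hdecay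

/-- Let `M, ν₂ → ∞` with `ν₂ = M^α` for a fixed `0 < α < 1`, and
let `(ℓ_e)` be uniform over the compositions of `M + ν₂` into `M` positive parts.
For any small constant `θ > 0`, setting `ℓ_α = ⌈1/(1−α) + 1 + θ⌉`, with high probability
`ℓ_e ≤ ℓ_α` for every `e`. -/
theorem no_edge_longer_than_ell_alpha
    (α θ : ℝ) (hα0 : 0 < α) (hα1 : α < 1) (hθ : 0 < θ)
    (M ν : ℕ → ℕ)
    (hM : Tendsto M atTop atTop) (hν : Tendsto ν atTop atTop)
    (hpow : ∀ t, (ν t : ℝ) = (M t : ℝ) ^ α) :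
    Tendsto (fun t => compProb (M t) (ν t + M t)
      (fun ℓ => ∃ e : Fin (M t), ⌈1 / (1 - α) + 1 + θ⌉₊ < ℓ e))
      atTop (nhds 0) :=
  no_edge_longer_than_ell_alpha_general α θ hα1 hθ M ν hM hpow
end
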